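/- arXiv:math/9903181 — 3 statements merged into one kernel-verified Lean document; each statement's English description precedes it below -/
import Mathlib

section
/- For all i, j ∈ ℤ/nℤ one has the operator identity [e_i^T, f_j^T] = δ_{ij}·h_i^T on N; that is, [e_i^T, f_j^T] = 0 if i ≠ j, and [e_i^T, f_i^T] = h_i^T. -/
/-!
Common setup: raiz for the cyclic quiver `Ã_{n-1}`, the polynomial algebra
`N = ℚ[x_θ : θ ∈ R⁺(n)]`, and the locally finite differential operators
`E(θ)`, `Ẽ(θ)`, `B(θ)`, `𝔅_i`, `𝔈_i`, `Δ_i`, and the Chevalley operators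
`e_i^T`, `h_i^T`, `f_i^T`, following Finkelberg–Kuznetsov.
-/

open MvPolynomial

/-- A raiz for the cyclic quiver with `n` vertices: a pair `(p,q)` of integers with
`p ≤ q`, modulo simultaneous translation of both entries by `n`; it is faithfully
encoded by the ending class `q mod n : ZMod n` together with the (positive) length
`q - p + 1 : ℕ+`. -/
abbrev Raiz (n : ℕ) : Type := ZMod n × ℕ+

namespace Raiz

variable {n : ℕ}

/-- The class at which a raiz begins: for `(p,q)` this is `p mod n = (q - len + 1) mod n`. -/
def beg (θ : Raiz n) : ZMod n := θ.1 - ((θ.2 : ℕ) : ZMod n) + 1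

/-- `θ = (p,q)` ends at `i` iff `q ≡ i (mod n)`. -/
def Ends (θ : Raiz n) (i : ZMod n) : Prop := θ.1 = i

/-- `θ = (p,q)` begins at `i` iff `p ≡ i (mod n)`. -/
def Begins (θ : Raiz n) (i : ZMod n) : Prop := beg θ = i

/-- The simple raiz `(i,i)`. -/
def simple (i : ZMod n) : Raiz n := (i, 1)

/-- The concatenation `ϑ⌣θ`: it is defined (`some`) exactly when `θ` begins at the
class following the class at which `ϑ` ends; for `ϑ = (a,b)` ending at `i-1` and
`θ = (p,q)` beginning at `i` it is `(a, b+q-p+1)`, i.e. it ends where `θ` ends and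
its length is the sum of the lengths. -/
def cat (ϑ θ : Raiz n) : Option (Raiz n) :=
  if beg θ = ϑ.1 + 1 then some (θ.1, ϑ.2 + θ.2) else none

/-- `dimAt θ j` is the number of integers in `[p,q]` congruent to `j` mod `n`:
the dimension vector `dim θ ∈ ℕ^{ℤ/nℤ}` of the raiz `θ`. -/
def dimAt (θ : Raiz n) (j : ZMod n) : ℕ :=
  ((Finset.range (θ.2 : ℕ)).filter (fun t => θ.1 - ((t : ℕ) : ZMod n) = j)).card

end Raiz

/-- The polynomial algebra `N = ℚ[x_θ : θ ∈ R⁺(n)]`. -/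
abbrev Pol (n : ℕ) := MvPolynomial (Raiz n) ℚ

/-- Operators on `N`. -/
abbrev Op (n : ℕ) := Pol n → Pol n

noncomputable section

/-- The locally finite differential operator `Σ_η c(η)·∂/∂x_η`: applied to a
polynomial `P` only the (finitely many) variables occurring in `P` contribute,
since `∂P/∂x_η = 0` for `η ∉ vars P`. -/
def diffOp {n : ℕ} (c : Raiz n → Pol n) : Op n :=
  fun P => ∑ η ∈ P.vars, c η * pderiv η P

/-- `Ẽ(θ) = Σ_{ϑ ∈ E_{i-1}} x_ϑ ∂/∂x_{ϑ⌣θ}` for a raiz `θ` beginning at `i`: the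
term `ϑ = 0` contributes `∂/∂x_θ` (as `x_0 = 1` and `0⌣θ = θ`), and a nonzero `ϑ`
ending at `i-1` contributes at the variable `η = ϑ⌣θ`, i.e. at `η` with the same
end as `θ` and `len η > len θ`, with coefficient `x_ϑ`, where
`ϑ = (beg θ - 1, len η - len θ)`. -/
def Etil {n : ℕ} (θ : Raiz n) : Op n :=
  diffOp (fun η =>
    if η = θ then 1
    else if η.1 = θ.1 ∧ θ.2 < η.2 then X ((Raiz.beg θ - 1, η.2 - θ.2) : Raiz n) else 0)

/-- `E(θ) = Σ_{ϑ ∈ E_{i-1}} x_{ϑ⌣θ} ∂/∂x_ϑ` for a raiz `θ` beginning at `i`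
(the `ϑ = 0` term vanishes since `∂/∂x_0 = 0`). -/
def Eop {n : ℕ} (θ : Raiz n) : Op n :=
  diffOp (fun ϑ => if ϑ.1 = Raiz.beg θ - 1 then X ((θ.1, ϑ.2 + θ.2) : Raiz n) else 0)

/-- `B(θ) = Σ_{ϑ ∈ B_{i+1}} x_{θ⌣ϑ} ∂/∂x_ϑ` for a raiz `θ` ending at `i`
(the `ϑ = 0` term vanishes since `∂/∂x_0 = 0`). -/
def Bop {n : ℕ} (θ : Raiz n) : Op n :=
  diffOp (fun ϑ => if Raiz.beg ϑ = θ.1 + 1 then X ((ϑ.1, θ.2 + ϑ.2) : Raiz n) else 0)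

/-- `𝔅_i = Σ_{0 ≠ θ ∈ B_{i+1}} x_θ ∂/∂x_θ`. -/
def Bfrak {n : ℕ} (i : ZMod n) : Op n :=
  diffOp (fun θ => if Raiz.beg θ = i + 1 then X θ else 0)

/-- `𝔈_i = Σ_{0 ≠ θ ∈ E_{i-1}} x_θ ∂/∂x_θ`. -/
def Efrak {n : ℕ} (i : ZMod n) : Op n :=
  diffOp (fun θ => if θ.1 = i - 1 then X θ else 0)

/-- The commutator `[f,g] = f∘g - g∘f` of two operators. -/
def brak {n : ℕ} (f g : Op n) : Op n := fun P => f (g P) - g (f P)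

/-- Multiplication by `x_θ` as an operator on `N`. -/
def mulX {n : ℕ} (θ : Raiz n) : Op n := fun P => X θ * P

/-- Extend a raiz-indexed family of operators to `Option (Raiz n)`: a term with
an undefined concatenation is declared to be `0`. -/
def opt {n : ℕ} (F : Raiz n → Op n) : Option (Raiz n) → Op n
  | none => 0
  | some θ => F θ

/-- `Δ_i = 𝔅_{i-1} - 𝔅_i + c_i`, for a fixed family of constants `c`. -/
def Delta {n : ℕ} (c : ZMod n → ℚ) (i : ZMod n) : Op n :=
  fun P => Bfrak (i - 1) P - Bfrak i P + c i • P

/-- The Chevalley operator `e_i^T = Ẽ(i)`. -/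
def eT {n : ℕ} (i : ZMod n) : Op n := Etil (Raiz.simple i)

/-- The Chevalley operator `h_i^T = 𝔈_{i+1} - 𝔈_i + Δ_i`. -/
def hT {n : ℕ} (c : ZMod n → ℚ) (i : ZMod n) : Op n :=
  fun P => Efrak (i + 1) P - Efrak i P + Delta c i P

/-- The Chevalley operator `f_i^T = B(i) - E(i) + x_i·Δ_i`. -/
def fT {n : ℕ} (c : ZMod n → ℚ) (i : ZMod n) : Op n :=
  fun P => Bop (Raiz.simple i) P - Eop (Raiz.simple i) P + X (Raiz.simple i) * Delta c i P

/-- The affine Cartan matrix of type `Ã_{n-1}` (for `n ≥ 2`): `a_ii = 2`;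
`a_ij = -1` if `j = i±1` and `n ≠ 2`; `a_ij = -2` if `n = 2` and `j = i+1 ≠ i`;
`a_ij = 0` otherwise. -/
def cartan (n : ℕ) (i j : ZMod n) : ℤ :=
  if j = i then 2
  else if n = 2 then -2
  else if j = i + 1 ∨ j = i - 1 then -1
  else 0

/-- The projection `ζ : R⁺(m) → R⁺(n)` for `n ∣ m`: the class of `(p,q)` modulo `m`
is sent to its class modulo `n`. -/
def Raiz.zetaR {n m : ℕ} (h : n ∣ m) : Raiz m → Raiz n :=
  fun θ => (ZMod.castHom h (ZMod n) θ.1, θ.2)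

/-- The induced `ℚ`-algebra homomorphism `ζ : ℚ[x_ϑ : ϑ ∈ R⁺(m)] → ℚ[x_θ : θ ∈ R⁺(n)]`,
`x_ϑ ↦ x_{ζ(ϑ)}`. -/
def zeta {n m : ℕ} (h : n ∣ m) : Pol m →ₐ[ℚ] Pol n :=
  MvPolynomial.rename (Raiz.zetaR h)

/-- The natural-number representatives in `[0, m)` of the residues `≡ i (mod n)`:
for `n ∣ m` these enumerate (via `ℕ → ZMod m`) exactly the classes `j ∈ ℤ/mℤ` with
`j ≡ i (mod n)`. -/
def fiber (n m : ℕ) (i : ZMod n) : Finset ℕ :=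
  (Finset.range m).filter (fun t => ((t : ZMod n) = i))

/-- All raiz of level `n` with length at most `m`. -/
def raizUpTo (n m : ℕ) : Finset (Raiz n) :=
  ((Finset.range n).image (fun a : ℕ => ((a : ZMod n)))) ×ˢ
    ((Finset.range m).image (fun l : ℕ => (⟨l + 1, Nat.succ_pos l⟩ : ℕ+)))

open Classical in
/-- Kostant partitions of the dimension vector `γ`, as multisets `κ` of raiz with
`Σ_{θ ∈ κ} dim θ = γ`; the parameter `m` bounds the lengths of parts and the
multiplicities, so for `Σ_j γ(j) ≤ m` this is the set of all Kostant partitions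
of `γ`. -/
def kostant (n : ℕ) (γ : ZMod n → ℕ) (m : ℕ) : Finset (Multiset (Raiz n)) :=
  ((m • (raizUpTo n m).val).powerset.toFinset).filter
    (fun κ => ∀ j, (κ.map (fun θ => θ.dimAt j)).sum = γ j)

/-- The monomial `x^κ` attached to a Kostant partition `κ`. -/
def xPow {n : ℕ} (κ : Multiset (Raiz n)) : Pol n :=
  (κ.map (fun θ => (X θ : Pol n))).prod

/-- `P_n = Σ_{κ ∈ 𝔎(α_n)} (-1)^{K(κ)+1} x^κ`: the sum is over all Kostant partitions
of the all-ones dimension vector `α_n` (all of whose parts have length `≤ n` and which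
have at most `n` parts). -/
def Ppoly (n : ℕ) : Pol n :=
  ∑ κ ∈ kostant n (fun _ => 1) n, ((-1 : ℚ) ^ (Multiset.card κ + 1)) • xPow κ

open Classical in
/-- `a_p = Σ_{θ : dim θ = p·α_n} Ẽ(θ)` for `p ≥ 1` (a finite sum: such `θ` have
length `p·n`). -/
def aPos (n p : ℕ) : Op n :=
  fun P => ∑ θ ∈ (raizUpTo n (p * n)).filter (fun θ => ∀ j, θ.dimAt j = p), Etil θ P

/-- `a_{-p}`: `c₀` times the operator of multiplication by `ζ(P_{pn})`, for `p ≥ 1`. -/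
def aNeg (n : ℕ) (c₀ : ℚ) (p : ℕ) : Op n :=
  fun P => c₀ • (zeta (dvd_mul_left n p) (Ppoly (p * n)) * P)

end

/-!
Apart from the multiplication operators `c_j x_j` in `f_j^T` and `c_i` in `h_i^T`, all operators
involved are derivations of `N`. Writing `f_j^T = F_j + c_j x_j` and `h_i^T = H_i + c_i` with
derivations `F_j = (B(j) - E(j)) + x_j (𝔅_{j-1} - 𝔅_j)` and `H_i`, and using `[e_i^T, x_j] = δ_ij`,
the claim becomes the identity `[e_i^T, F_j] = δ_ij H_i` of derivations, which it suffices to check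
on the generators `x_ρ`, separately for simple and non-simple `ρ`.
-/

theorem Derivation.finset_sum_apply {ι R A M : Type*} [CommSemiring R] [CommSemiring A]
    [Algebra R A] [AddCommMonoid M] [Module A M] [Module R M] (s : Finset ι)
    (D : ι → Derivation R A M) (a : A) : (∑ i ∈ s, D i) a = ∑ i ∈ s, D i a := by
  rw [← Derivation.coeFnAddMonoidHom_apply, map_sum, Finset.sum_apply]
  rfl

theorem Derivation.commutator_smul_right {R A : Type*} [CommRing R] [CommRing A] [Algebra R A]
    (D₁ D₂ : Derivation R A A) (a : A) : ⁅D₁, a • D₂⁆ = D₁ a • D₂ + a • ⁅D₁, D₂⁆ := by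
  ext x
  simp only [Derivation.commutator_apply, Derivation.smul_apply, Derivation.add_apply,
    smul_eq_mul, Derivation.leibniz]
  ring

noncomputable section Chevalley

variable {n : ℕ}

theorem diffOp_eq_mkDerivation (c : Raiz n → Pol n) : diffOp c = mkDerivation ℚ c := by
  classical
  funext P
  have h : mkDerivation ℚ c P = (∑ η ∈ P.vars, c η • pderiv η) P :=
    derivation_eq_of_forall_mem_vars fun i hi => by
      simp [Derivation.finset_sum_apply, mkDerivation_X, pderiv_X, Pi.single_apply, hi]
  simp [h, diffOp, Derivation.finset_sum_apply]

theorem diffOp_sub_diffOp (c c' : Raiz n → Pol n) (P : Pol n) :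
    diffOp c P - diffOp c' P = mkDerivation ℚ (c - c') P := by
  rw [diffOp_eq_mkDerivation, diffOp_eq_mkDerivation, ← Derivation.sub_apply]
  congr 1
  exact derivation_ext fun η => by simp

@[simp]
theorem Raiz.beg_one (r : ZMod n) : Raiz.beg ((r, 1) : Raiz n) = r := by
  simp [Raiz.beg]

theorem Raiz.beg_simple (i : ZMod n) : (Raiz.simple i).beg = i := Raiz.beg_one i

theorem Raiz.beg_sub_one (r : ZMod n) (m : ℕ+) :
    Raiz.beg ((r - 1, m) : Raiz n) = Raiz.beg ((r, m + 1) : Raiz n) := by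
  simp only [Raiz.beg, PNat.add_coe, PNat.one_coe, Nat.cast_add, Nat.cast_one]
  ring

def eCoeff (i : ZMod n) (η : Raiz n) : Pol n :=
  if η = Raiz.simple i then 1 else if η.1 = i ∧ 1 < η.2 then X ((i - 1, η.2 - 1) : Raiz n) else 0

def beCoeff (j : ZMod n) (ϑ : Raiz n) : Pol n :=
  (if Raiz.beg ϑ = j + 1 then X ((ϑ.1, 1 + ϑ.2) : Raiz n) else 0)
    - (if ϑ.1 = j - 1 then X ((j, ϑ.2 + 1) : Raiz n) else 0)

def begWeight (j : ZMod n) (ϑ : Raiz n) : ℚ :=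
  (if Raiz.beg ϑ = j then 1 else 0) - (if Raiz.beg ϑ = j + 1 then 1 else 0)

def endWeight (i : ZMod n) (ρ : Raiz n) : ℚ :=
  (if ρ.1 = i then 1 else 0) - (if ρ.1 = i - 1 then 1 else 0)

def eDer (i : ZMod n) : Derivation ℚ (Pol n) (Pol n) := mkDerivation ℚ (eCoeff i)

def beDer (j : ZMod n) : Derivation ℚ (Pol n) (Pol n) := mkDerivation ℚ (beCoeff j)

def deltaDer (j : ZMod n) : Derivation ℚ (Pol n) (Pol n) :=
  mkDerivation ℚ fun ϑ => begWeight j ϑ • X ϑ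

def endDer (i : ZMod n) : Derivation ℚ (Pol n) (Pol n) :=
  mkDerivation ℚ fun ρ => endWeight i ρ • X ρ

def fDer (j : ZMod n) : Derivation ℚ (Pol n) (Pol n) :=
  beDer j + (X (Raiz.simple j) : Pol n) • deltaDer j

def hDer (i : ZMod n) : Derivation ℚ (Pol n) (Pol n) := endDer i + deltaDer i

theorem eT_eq_eDer (i : ZMod n) : eT i = eDer i := by
  rw [eT, Etil, diffOp_eq_mkDerivation, eDer, Raiz.beg_simple]
  rfl

theorem Bop_sub_Eop (j : ZMod n) (P : Pol n) :
    Bop (Raiz.simple j) P - Eop (Raiz.simple j) P = beDer j P := by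
  rw [Bop, Eop, diffOp_sub_diffOp, Raiz.beg_simple]
  rfl

theorem Bfrak_sub_Bfrak (j : ZMod n) (P : Pol n) :
    Bfrak (j - 1) P - Bfrak j P = deltaDer j P := by
  rw [Bfrak, Bfrak, diffOp_sub_diffOp, deltaDer, sub_add_cancel]
  congr 2
  funext ϑ
  simp [begWeight, sub_smul, ite_smul]

theorem Efrak_sub_Efrak (i : ZMod n) (P : Pol n) :
    Efrak (i + 1) P - Efrak i P = endDer i P := by
  rw [Efrak, Efrak, diffOp_sub_diffOp, endDer, add_sub_cancel_right]
  congr 2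
  funext ρ
  simp [endWeight, sub_smul, ite_smul]

theorem fT_apply (c : ZMod n → ℚ) (j : ZMod n) (P : Pol n) :
    fT c j P = fDer j P + c j • (X (Raiz.simple j) * P) := by
  rw [fT, Delta, Bop_sub_Eop, Bfrak_sub_Bfrak, fDer, Derivation.add_apply,
    Derivation.smul_apply, smul_eq_mul, mul_add, mul_smul_comm, add_assoc]

theorem hT_apply (c : ZMod n → ℚ) (i : ZMod n) (P : Pol n) :
    hT c i P = hDer i P + c i • P := by
  rw [hT, Delta, Efrak_sub_Efrak, Bfrak_sub_Bfrak, hDer, Derivation.add_apply, add_assoc]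

theorem eDer_X_one (i r : ZMod n) : eDer i (X ((r, 1) : Raiz n)) = if r = i then 1 else 0 := by
  simp [eDer, eCoeff, Raiz.simple]

theorem eDer_X_simple (i j : ZMod n) : eDer i (X (Raiz.simple j)) = if i = j then 1 else 0 :=
  (eDer_X_one i j).trans (by simp only [eq_comm])

theorem eDer_X_add_one (i r : ZMod n) (m : ℕ+) :
    eDer i (X ((r, m + 1) : Raiz n)) = if r = i then X ((i - 1, m) : Raiz n) else 0 := by
  have h1 : (1 : ℕ+) < m + 1 := by simp
  simp [eDer, eCoeff, Raiz.simple, h1.ne', h1, PNat.add_sub]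

theorem eDer_X_one_add (i r : ZMod n) (m : ℕ+) :
    eDer i (X ((r, 1 + m) : Raiz n)) = if r = i then X ((i - 1, m) : Raiz n) else 0 := by
  rw [add_comm, eDer_X_add_one]

-- `e_i^T` sends `x_{(r, m+1)}` to a multiple of `x_{(i-1, m)}`, which begins where `(r, m+1)` does,
-- and `𝔅_{j-1} - 𝔅_j` scales each `x_ϑ` by a weight depending only on the beginning of `ϑ`.
theorem commutator_eDer_deltaDer_X_add_one (i j r : ZMod n) (m : ℕ+) :
    ⁅eDer i, deltaDer j⁆ (X ((r, m + 1) : Raiz n)) = 0 := by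
  rw [Derivation.commutator_apply, deltaDer, mkDerivation_X, Derivation.map_smul, eDer_X_add_one]
  split_ifs with h
  · rw [mkDerivation_X, begWeight, begWeight, h, Raiz.beg_sub_one, sub_self]
  · rw [smul_zero, map_zero, sub_zero]

theorem commutator_eDer_beDer_X_add_one (i j r : ZMod n) (m : ℕ+) :
    ⁅eDer i, beDer j⁆ (X ((r, m + 1) : Raiz n))
      = if i = j then endWeight i (r, m + 1) • X ((r, m + 1) : Raiz n) else 0 := by
  rw [Derivation.commutator_apply, eDer_X_add_one, apply_ite (beDer j), beDer, mkDerivation_X,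
    mkDerivation_X, beCoeff, beCoeff, map_sub, apply_ite (eDer i), apply_ite (eDer i),
    eDer_X_one_add, eDer_X_add_one, ← Raiz.beg_sub_one]
  simp only [endWeight, map_zero, add_comm 1 m, sub_left_inj]
  by_cases hij : i = j
  · subst hij
    by_cases hr : r = i
    · subst hr
      by_cases h : r = r - 1
      · simp only [← h]
        simp
      · simp [h]
    · by_cases hr' : r = i - 1
      · subst hr'
        simp [hr]
      · simp [hr, hr']
  · by_cases hr : r = i
    · subst hr
      simp [hij, Ne.symm hij]
    · simp [hr, hij, Ne.symm hij]

theorem commutator_eDer_beDer_add_smul_X_one (i j r : ZMod n) :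
    (⁅eDer i, beDer j⁆ + (X (Raiz.simple j) : Pol n) • ⁅eDer i, deltaDer j⁆) (X ((r, 1) : Raiz n))
      = if i = j then endWeight i (r, 1) • X ((r, 1) : Raiz n) else 0 := by
  have hconst (D : Derivation ℚ (Pol n) (Pol n)) : D (if r = i then 1 else 0) = 0 := by
    rw [apply_ite D, D.map_one_eq_zero, map_zero, ite_self]
  rw [Derivation.add_apply, Derivation.smul_apply, Derivation.commutator_apply,
    Derivation.commutator_apply, eDer_X_one, hconst, hconst, beDer, mkDerivation_X, beCoeff,
    deltaDer, mkDerivation_X, Derivation.map_smul, map_sub, apply_ite (eDer i),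
    apply_ite (eDer i), eDer_X_one_add, eDer_X_add_one, eDer_X_one]
  simp only [Raiz.beg_one, begWeight, endWeight, Raiz.simple, map_zero, sub_zero]
  rcases eq_or_ne (1 : ZMod n) 0 with h1 | h1
  · have := subsingleton_of_zero_eq_one h1.symm
    obtain rfl := Subsingleton.elim r i
    obtain rfl := Subsingleton.elim j r
    simp [h1]
  have hsub : ∀ a : ZMod n, a ≠ a - 1 := fun a h => h1 (by linear_combination h)
  by_cases hr : r = i
  · subst hr
    by_cases hij : r = j
    · subst hij
      simp [hsub, h1]
    · by_cases h : r = j + 1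
      · subst h
        simp [h1]
      · simp [hij, h, Ne.symm hij]
  · by_cases hij : i = j
    · subst hij
      by_cases h : r = i - 1
      · subst h
        simp [hr]
      · simp [hr, h]
    · simp [hr, hij, Ne.symm hij]

theorem commutator_eDer_beDer_add_smul (i j : ZMod n) :
    ⁅eDer i, beDer j⁆ + (X (Raiz.simple j) : Pol n) • ⁅eDer i, deltaDer j⁆
      = if i = j then endDer i else 0 := by
  refine derivation_ext fun ρ => ?_
  obtain ⟨r, ℓ⟩ := ρ
  have hrhs : (if i = j then endDer i else 0) (X ((r, ℓ) : Raiz n))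
      = if i = j then endWeight i (r, ℓ) • X ((r, ℓ) : Raiz n) else 0 := by
    split_ifs <;> simp [endDer]
  rw [hrhs]
  induction ℓ using PNat.recOn with
  | one => exact commutator_eDer_beDer_add_smul_X_one i j r
  | succ m _ =>
    rw [Derivation.add_apply, Derivation.smul_apply, commutator_eDer_beDer_X_add_one,
      commutator_eDer_deltaDer_X_add_one, smul_zero, add_zero]

theorem commutator_eDer_fDer (i j : ZMod n) :
    ⁅eDer i, fDer j⁆ = if i = j then hDer i else 0 := by
  rw [fDer, lie_add (L := Derivation ℚ (Pol n) (Pol n)), Derivation.commutator_smul_right,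
    eDer_X_simple, add_left_comm, commutator_eDer_beDer_add_smul, hDer]
  split_ifs with hij
  · rw [hij, one_smul, add_comm]
  · rw [zero_smul, add_zero]

end Chevalley

theorem commutator_eT_fT_general {n : ℕ} (c : ZMod n → ℚ) (i j : ZMod n) :
    brak (eT i) (fT c j) = if i = j then hT c i else 0 := by
  funext P
  have hX : eDer i (X (Raiz.simple j) * P)
      = (if i = j then 1 else 0) * P + X (Raiz.simple j) * eDer i P := by
    rw [Derivation.leibniz, eDer_X_simple, smul_eq_mul, smul_eq_mul]
    ring
  have hcomm := congrArg (fun D => D P) (commutator_eDer_fDer i j)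
  simp only [Derivation.commutator_apply] at hcomm
  simp only [brak, fT_apply, eT_eq_eDer, map_add, Derivation.map_smul, hX]
  split_ifs at hcomm ⊢ with hij
  · subst hij
    rw [hT_apply]
    simp only [smul_eq_C_mul] at hcomm ⊢
    linear_combination hcomm
  · simp only [smul_eq_C_mul] at hcomm ⊢
    linear_combination hcomm

/-- For all `i, j ∈ ℤ/nℤ`, `[e_i^T, f_j^T] = δ_{ij}·h_i^T`. -/
theorem commutator_eT_fT {n : ℕ} (hn : 2 ≤ n) (c : ZMod n → ℚ) (i j : ZMod n) :
    brak (eT i) (fT c j) = if i = j then hT c i else 0 :=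
  commutator_eT_fT_general c i j
end

section
/- If n = 2 and j = i+1 in ℤ/2ℤ, then the operator f_j^T on N satisfies the Serre relation [f_i^T, [f_i^T, [f_i^T, f_j^T]]] = 0. -/
/-!
Common setup: raiz for the cyclic quiver `Ã_{n-1}`, the polynomial algebra
`N = ℚ[x_θ : θ ∈ R⁺(n)]`, and the locally finite differential operators
`E(θ)`, `Ẽ(θ)`, `B(θ)`, `𝔅_i`, `𝔈_i`, `Δ_i`, and the Chevalley operators
`e_i^T`, `h_i^T`, `f_i^T`, following Finkelberg–Kuznetsov.
-/

open MvPolynomial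

noncomputable section SerreAuxSec
namespace SerreAux
open MvPolynomial

variable {n : ℕ}

lemma diffOp_eq_sum (c : Raiz n → Pol n) (P : Pol n) (S : Finset (Raiz n)) (hS : P.vars ⊆ S) :
    diffOp c P = ∑ η ∈ S, c η * pderiv η P :=
  Finset.sum_subset hS fun η _ hη => by
    rw [pderiv_eq_zero_of_notMem_vars hη, mul_zero]

lemma diffOp_add (c : Raiz n → Pol n) (P Q : Pol n) :
    diffOp c (P + Q) = diffOp c P + diffOp c Q := by
  classical
  rw [diffOp_eq_sum c (P + Q) (P.vars ∪ Q.vars) (vars_add_subset P Q),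
      diffOp_eq_sum c P (P.vars ∪ Q.vars) Finset.subset_union_left,
      diffOp_eq_sum c Q (P.vars ∪ Q.vars) Finset.subset_union_right,
      ← Finset.sum_add_distrib]
  exact Finset.sum_congr rfl fun η _ => by rw [map_add]; ring

lemma diffOp_eq (c : Raiz n → Pol n) (P : Pol n) :
    diffOp c P = MvPolynomial.mkDerivation ℚ c P := by
  classical
  induction P using MvPolynomial.induction_on with
  | C a =>
      rw [derivation_C]
      simp [diffOp, vars_C]
  | add P Q hP hQ => rw [diffOp_add, map_add, hP, hQ]
  | mul_X P η hP =>
      have hS : (P * X η).vars ⊆ P.vars ∪ {η} :=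
        (vars_mul _ _).trans (by rw [vars_X])
      rw [diffOp_eq_sum c _ _ hS]
      have hcong : ∀ ξ ∈ P.vars ∪ {η},
          c ξ * pderiv ξ (P * X η)
            = (c ξ * pderiv ξ P) * X η + (if ξ = η then c η * P else 0) := by
        intro ξ _
        rw [pderiv_mul]
        by_cases hξ : ξ = η
        · subst hξ; rw [pderiv_X_self, if_pos rfl]; ring
        · rw [pderiv_X_of_ne (fun h => hξ h.symm), if_neg hξ]; ring
      rw [Finset.sum_congr rfl hcong, Finset.sum_add_distrib, ← Finset.sum_mul,
        Finset.sum_ite_eq' (P.vars ∪ {η}) η (fun _ => c η * P),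
        if_pos (Finset.mem_union_right _ (Finset.mem_singleton_self η)),
        ← diffOp_eq_sum c P _ Finset.subset_union_left, hP,
        Derivation.leibniz, smul_eq_mul, smul_eq_mul, mkDerivation_X]
      ring

lemma diffOp_combo (c₁ c₂ c₃ c₄ : Raiz n → Pol n) (g : Pol n) (P : Pol n) :
    diffOp (fun η => c₁ η - c₂ η + g * c₃ η - g * c₄ η) P
      = diffOp c₁ P - diffOp c₂ P + g * diffOp c₃ P - g * diffOp c₄ P := by
  simp only [diffOp]
  rw [Finset.mul_sum, Finset.mul_sum, ← Finset.sum_sub_distrib, ← Finset.sum_add_distrib,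
    ← Finset.sum_sub_distrib]
  exact Finset.sum_congr rfl fun η _ => by ring

/-- The derivation part of `f_i^T`. -/
def fCoef (i : ZMod n) : Raiz n → Pol n := fun ϑ =>
  (if Raiz.beg ϑ = (Raiz.simple i).1 + 1
      then (X ((ϑ.1, (Raiz.simple i).2 + ϑ.2) : Raiz n) : Pol n) else 0)
  - (if ϑ.1 = Raiz.beg (Raiz.simple i) - 1
      then (X (((Raiz.simple i).1, ϑ.2 + (Raiz.simple i).2) : Raiz n) : Pol n) else 0)
  + X (Raiz.simple i) * (if Raiz.beg ϑ = (i - 1) + 1 then (X ϑ : Pol n) else 0)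
  - X (Raiz.simple i) * (if Raiz.beg ϑ = i + 1 then (X ϑ : Pol n) else 0)

lemma fT_eq (c : ZMod n → ℚ) (i : ZMod n) (P : Pol n) :
    fT c i P = MvPolynomial.mkDerivation ℚ (fCoef i) P + (c i • X (Raiz.simple i)) * P := by
  rw [← diffOp_eq]
  calc fT c i P
      = diffOp (fun ϑ => if Raiz.beg ϑ = (Raiz.simple i).1 + 1
            then (X ((ϑ.1, (Raiz.simple i).2 + ϑ.2) : Raiz n) : Pol n) else 0) P
        - diffOp (fun ϑ => if ϑ.1 = Raiz.beg (Raiz.simple i) - 1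
            then (X (((Raiz.simple i).1, ϑ.2 + (Raiz.simple i).2) : Raiz n) : Pol n) else 0) P
        + X (Raiz.simple i) *
          (diffOp (fun ϑ => if Raiz.beg ϑ = (i - 1) + 1 then (X ϑ : Pol n) else 0) P
            - diffOp (fun ϑ => if Raiz.beg ϑ = i + 1 then (X ϑ : Pol n) else 0) P
            + c i • P) := rfl
    _ = diffOp (fCoef i) P + (c i • X (Raiz.simple i)) * P := by
        rw [show diffOp (fCoef i) P = _ from diffOp_combo _ _ _ _ (X (Raiz.simple i)) P]
        simp only [smul_eq_C_mul]
        ring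

end SerreAux
end SerreAuxSec
noncomputable section SerreAux2Sec
namespace SerreAux
open MvPolynomial

lemma z2add (x : ZMod 2) : x + 1 + 1 = x := by revert x; decide
lemma z2sub (x : ZMod 2) : x - 1 = x + 1 := by revert x; decide
lemma z2ne (x : ZMod 2) : x + 1 ≠ x := by revert x; decide
lemma z2ne' (x : ZMod 2) : x ≠ x + 1 := by revert x; decide

/-- The derivation part of `f_i^T`, `n = 2`. -/
def DD (i : ZMod 2) : Derivation ℚ (Pol 2) (Pol 2) := MvPolynomial.mkDerivation ℚ (fCoef i)

lemma fT_eq₂ (c : ZMod 2 → ℚ) (i : ZMod 2) (P : Pol 2) :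
    fT c i P = DD i P + (c i • X (Raiz.simple i)) * P := fT_eq c i P

lemma begsimple (i : ZMod 2) : Raiz.beg (Raiz.simple i) = i := by
  show i - ((((1 : ℕ+) : ℕ) : ZMod 2)) + 1 = i
  rw [PNat.one_coe, Nat.cast_one, sub_add_cancel]

lemma begsimple' (i : ZMod 2) : Raiz.beg ((i, 1) : Raiz 2) = i := begsimple i

lemma Dgen_a (i : ZMod 2) (L : ℕ+) :
    DD i (X ((i, L) : Raiz 2)) =
      if ((L : ℕ) : ZMod 2) = 0
      then X ((i, L + 1) : Raiz 2) - X ((i, 1) : Raiz 2) * X ((i, L) : Raiz 2)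
      else X ((i, 1) : Raiz 2) * X ((i, L) : Raiz 2) := by
  rw [DD, mkDerivation_X]
  have hb : Raiz.beg ((i, L) : Raiz 2) = i - ((L : ℕ) : ZMod 2) + 1 := rfl
  rcases eq_or_ne (((L : ℕ)) : ZMod 2) 0 with h | h
  · rw [if_pos h]
    have hb' : Raiz.beg ((i, L) : Raiz 2) = i + 1 := by rw [hb, h, sub_zero]
    simp only [fCoef, hb', Raiz.simple]
    simp [begsimple', z2sub, sub_add_cancel, z2add, z2ne, z2ne', add_comm (1 : ℕ+) L]
  · have h1 : ((L : ℕ) : ZMod 2) = 1 := by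
      rcases (by decide : ∀ x : ZMod 2, x = 0 ∨ x = 1) (((L : ℕ)) : ZMod 2) with h' | h'
      · exact absurd h' h
      · exact h'
    rw [if_neg h]
    have hb' : Raiz.beg ((i, L) : Raiz 2) = i := by rw [hb, h1, sub_add_cancel]
    simp only [fCoef, hb', Raiz.simple]
    simp [begsimple', z2sub, sub_add_cancel, z2add, z2ne, z2ne']

lemma Dgen_b (i e : ZMod 2) (L : ℕ+) (he : e = i + 1) :
    DD i (X ((e, L) : Raiz 2)) =
      if ((L : ℕ) : ZMod 2) = 0
      then - X ((i, L + 1) : Raiz 2) + X ((i, 1) : Raiz 2) * X ((e, L) : Raiz 2)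
      else X ((e, L + 1) : Raiz 2) - X ((i, L + 1) : Raiz 2)
            - X ((i, 1) : Raiz 2) * X ((e, L) : Raiz 2) := by
  subst he
  rw [DD, mkDerivation_X]
  have hb : Raiz.beg ((i + 1, L) : Raiz 2) = i + 1 - ((L : ℕ) : ZMod 2) + 1 := rfl
  rcases eq_or_ne (((L : ℕ)) : ZMod 2) 0 with h | h
  · rw [if_pos h]
    have hb' : Raiz.beg ((i + 1, L) : Raiz 2) = i := by rw [hb, h, sub_zero, z2add]
    simp only [fCoef, hb', Raiz.simple]
    simp [begsimple', z2sub, sub_add_cancel, z2add, z2ne, z2ne']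
  · have h1 : ((L : ℕ) : ZMod 2) = 1 := by
      rcases (by decide : ∀ x : ZMod 2, x = 0 ∨ x = 1) (((L : ℕ)) : ZMod 2) with h' | h'
      · exact absurd h' h
      · exact h'
    rw [if_neg h]
    have hb' : Raiz.beg ((i + 1, L) : Raiz 2) = i + 1 := by rw [hb, h1, sub_add_cancel]
    simp only [fCoef, hb', Raiz.simple]
    simp [begsimple', z2sub, sub_add_cancel, z2add, z2ne, z2ne', add_comm (1 : ℕ+) L]

lemma brak_form {n : ℕ} (d₁ d₂ : Derivation ℚ (Pol n) (Pol n)) (g₁ g₂ : Pol n)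
    (F₁ F₂ : Op n) (h₁ : ∀ P, F₁ P = d₁ P + g₁ * P) (h₂ : ∀ P, F₂ P = d₂ P + g₂ * P)
    (P : Pol n) :
    brak F₁ F₂ P = ⁅d₁, d₂⁆ P + (d₁ g₂ - d₂ g₁) * P := by
  simp only [brak, h₁, h₂, Derivation.commutator_apply, map_add, map_sub, Derivation.leibniz,
    smul_eq_mul]
  ring

lemma step0 {m : ℕ+} (h : ((m : ℕ) : ZMod 2) = 0) : (((m + 1 : ℕ+) : ℕ) : ZMod 2) = 1 := by
  push_cast
  rw [h]; decide

lemma step1 {m : ℕ+} (h : ((m : ℕ) : ZMod 2) = 1) : (((m + 1 : ℕ+) : ℕ) : ZMod 2) = 0 := by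
  push_cast
  rw [h]; decide

end SerreAux
end SerreAux2Sec
set_option maxHeartbeats 2000000 in
open SerreAux in
/-- If `n = 2` and `j = i + 1` in `ℤ/2ℤ` then `[f_i^T, [f_i^T, [f_i^T, f_j^T]]] = 0`. -/
theorem serre_fT_n_eq_two {n : ℕ} (hn : n = 2) (c : ZMod n → ℚ)
    (i j : ZMod n) (hj : j = i + 1) :
    brak (fT c i) (brak (fT c i) (brak (fT c i) (fT c j))) = 0 := by
  subst hn; subst hj
  have hz : ∀ x : ZMod 2, x = 0 ∨ x = 1 := by decide
  have hq1 : (((1 : ℕ+) : ℕ) : ZMod 2) = 1 := by decide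
  have hq2 : (((1 + 1 : ℕ+) : ℕ) : ZMod 2) = 0 := by decide
  have hq3 : (((1 + 1 + 1 : ℕ+) : ℕ) : ZMod 2) = 1 := by decide
  have h1 : ∀ P, brak (fT c i) (fT c (i + 1)) P =
      ⁅DD i, DD (i + 1)⁆ P +
        (DD i (c (i + 1) • X (Raiz.simple (i + 1))) - DD (i + 1) (c i • X (Raiz.simple i))) * P :=
    fun P => brak_form _ _ _ _ _ _ (fT_eq₂ c i) (fT_eq₂ c (i + 1)) P
  have h2 : ∀ P, brak (fT c i) (brak (fT c i) (fT c (i + 1))) P =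
      ⁅DD i, ⁅DD i, DD (i + 1)⁆⁆ P +
        (DD i (DD i (c (i + 1) • X (Raiz.simple (i + 1))) - DD (i + 1) (c i • X (Raiz.simple i)))
          - ⁅DD i, DD (i + 1)⁆ (c i • X (Raiz.simple i))) * P :=
    fun P => brak_form _ _ _ _ _ _ (fT_eq₂ c i) h1 P
  have h3 : ∀ P, brak (fT c i) (brak (fT c i) (brak (fT c i) (fT c (i + 1)))) P =
      ⁅DD i, ⁅DD i, ⁅DD i, DD (i + 1)⁆⁆⁆ P +
        (DD i (DD i (DD i (c (i + 1) • X (Raiz.simple (i + 1)))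
              - DD (i + 1) (c i • X (Raiz.simple i)))
            - ⁅DD i, DD (i + 1)⁆ (c i • X (Raiz.simple i)))
          - ⁅DD i, ⁅DD i, DD (i + 1)⁆⁆ (c i • X (Raiz.simple i))) * P :=
    fun P => brak_form _ _ _ _ _ _ (fT_eq₂ c i) h2 P
  have key : ∀ η : Raiz 2,
      (⁅DD i, ⁅DD i, ⁅DD i, DD (i + 1)⁆⁆⁆ : Derivation ℚ (Pol 2) (Pol 2)) (X η) = 0 := by
    rintro ⟨e, L⟩
    have he : e = i ∨ e = i + 1 := by
      have h : ∀ e i : ZMod 2, e = i ∨ e = i + 1 := by decide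
      exact h e i
    rcases hz ((L : ℕ) : ZMod 2) with hp | hp
    · have p1 := step0 hp
      have p2 := step1 p1
      have p3 := step0 p2
      rcases he with h | h <;> subst h <;>
        · simp only [Derivation.commutator_apply, map_sub, map_add, map_neg,
            Derivation.leibniz, smul_eq_mul, Dgen_a, Dgen_b, z2add, hp, p1, p2, p3,
            hq1, hq2, hq3, one_ne_zero, eq_self_iff_true, ite_true, ite_false,
            if_true, if_false]
          ring
    · have p1 := step1 hp
      have p2 := step0 p1
      have p3 := step1 p2
      rcases he with h | h <;> subst h <;>
        · simp only [Derivation.commutator_apply, map_sub, map_add, map_neg,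
            Derivation.leibniz, smul_eq_mul, Dgen_a, Dgen_b, z2add, hp, p1, p2, p3,
            hq1, hq2, hq3, one_ne_zero, eq_self_iff_true, ite_true, ite_false,
            if_true, if_false]
          ring
  have hD0 : (⁅DD i, ⁅DD i, ⁅DD i, DD (i + 1)⁆⁆⁆ : Derivation ℚ (Pol 2) (Pol 2)) = 0 :=
    MvPolynomial.derivation_ext fun η => by simp [key η]
  have hm : DD i (DD i (DD i (c (i + 1) • X (Raiz.simple (i + 1)))
          - DD (i + 1) (c i • X (Raiz.simple i)))
        - ⁅DD i, DD (i + 1)⁆ (c i • X (Raiz.simple i)))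
      - ⁅DD i, ⁅DD i, DD (i + 1)⁆⁆ (c i • X (Raiz.simple i)) = 0 := by
    simp only [Raiz.simple, MvPolynomial.smul_eq_C_mul, Derivation.commutator_apply,
      map_sub, map_add, map_neg, Derivation.leibniz, smul_eq_mul,
      MvPolynomial.derivation_C, Dgen_a, Dgen_b, z2add, hq1, hq2, hq3, one_ne_zero,
      eq_self_iff_true, ite_true, ite_false, if_true, if_false, map_zero, mul_zero,
      zero_mul, add_zero, zero_add, sub_zero, zero_sub, neg_zero]
    ring
  funext P
  rw [h3 P, hD0, hm]
  simp
end

section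
/- For every k ≥ 2 and every raiz θ ∈ R⁺(n), the algebra homomorphism ζ: ℚ[x_ϑ : ϑ ∈ R⁺(kn)] → ℚ[x_θ : θ ∈ R⁺(n)] intertwines the operators Ẽ: for every polynomial P ∈ ℚ[x_ϑ : ϑ ∈ R⁺(kn)], one has Ẽ(θ)(ζ(P)) = ζ((Σ_{ϑ ∈ ζ^{−1}(θ)} Ẽ(ϑ))(P)), where the sum over the fiber ζ^{−1}(θ) ⊂ R⁺(kn) is locally finite. -/
/-!
Common setup: raiz for the cyclic quiver `Ã_{n-1}`, the polynomial algebra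
`N = ℚ[x_θ : θ ∈ R⁺(n)]`, and the locally finite differential operators
`E(θ)`, `Ẽ(θ)`, `B(θ)`, `𝔅_i`, `𝔈_i`, `Δ_i`, and the Chevalley operators
`e_i^T`, `h_i^T`, `f_i^T`, following Finkelberg–Kuznetsov.
-/

open MvPolynomial

noncomputable section

lemma diffOp_superset {n : ℕ} (c : Raiz n → Pol n) (P : Pol n) (S : Finset (Raiz n))
    (hS : P.vars ⊆ S) : diffOp c P = ∑ η ∈ S, c η * pderiv η P := by
  refine Finset.sum_subset hS (fun η _ hη => ?_)
  rw [pderiv_eq_zero_of_notMem_vars hη, mul_zero]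

lemma diffOp_add {n : ℕ} (c : Raiz n → Pol n) (P Q : Pol n) :
    diffOp c (P + Q) = diffOp c P + diffOp c Q := by
  rw [diffOp_superset c (P + Q) (P.vars ∪ Q.vars) (vars_add_subset P Q),
    diffOp_superset c P (P.vars ∪ Q.vars) Finset.subset_union_left,
    diffOp_superset c Q (P.vars ∪ Q.vars) Finset.subset_union_right,
    ← Finset.sum_add_distrib]
  simp [mul_add]

lemma diffOp_mul {n : ℕ} (c : Raiz n → Pol n) (P Q : Pol n) :
    diffOp c (P * Q) = diffOp c P * Q + P * diffOp c Q := by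
  rw [diffOp_superset c (P * Q) (P.vars ∪ Q.vars) (vars_mul P Q),
    diffOp_superset c P (P.vars ∪ Q.vars) Finset.subset_union_left,
    diffOp_superset c Q (P.vars ∪ Q.vars) Finset.subset_union_right,
    Finset.sum_mul, Finset.mul_sum, ← Finset.sum_add_distrib]
  refine Finset.sum_congr rfl (fun η _ => ?_)
  rw [pderiv_mul]; ring

lemma diffOp_C {n : ℕ} (c : Raiz n → Pol n) (a : ℚ) : diffOp c (C a) = 0 := by
  simp [diffOp, vars_C]

lemma diffOp_X {n : ℕ} (c : Raiz n → Pol n) (i : Raiz n) : diffOp c (X i) = c i := by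
  simp [diffOp, vars_X]

lemma Etil_add {n : ℕ} (θ : Raiz n) (P Q : Pol n) :
    Etil θ (P + Q) = Etil θ P + Etil θ Q := diffOp_add _ P Q

lemma Etil_mul {n : ℕ} (θ : Raiz n) (P Q : Pol n) :
    Etil θ (P * Q) = Etil θ P * Q + P * Etil θ Q := diffOp_mul _ P Q

lemma Etil_C {n : ℕ} (θ : Raiz n) (a : ℚ) : Etil θ (C a) = 0 := diffOp_C _ a

lemma Etil_X {n : ℕ} (θ i : Raiz n) :
    Etil θ (X i) = (if i = θ then 1
      else if i.1 = θ.1 ∧ θ.2 < i.2 then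
        X ((Raiz.beg θ - 1, i.2 - θ.2) : Raiz n) else 0) := diffOp_X _ i

lemma key {n k : ℕ} (hn : 2 ≤ n) (hk : 2 ≤ k) (θ : Raiz n) (i : Raiz (k * n)) :
    Etil θ (zeta (dvd_mul_left n k) (X i))
      = zeta (dvd_mul_left n k)
          (∑ t ∈ fiber n (k * n) θ.1,
            Etil ((((t : ZMod (k * n)), θ.2) : Raiz (k * n))) (X i)) := by
  have hkn : 0 < k * n := by positivity
  haveI : NeZero (k * n) := ⟨hkn.ne'⟩
  have hzX : zeta (dvd_mul_left n k) (X i) = X (Raiz.zetaR (dvd_mul_left n k) i) :=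
    rename_X _ i
  rw [hzX]
  rw [Etil_X]
  have hrw : ∀ t : ℕ, Etil ((((t : ZMod (k * n)), θ.2) : Raiz (k * n))) (X i)
      = (if i = ((t : ZMod (k * n)), θ.2) then 1
        else if i.1 = (t : ZMod (k * n)) ∧ θ.2 < i.2 then
          X ((Raiz.beg ((t : ZMod (k * n)), θ.2) - 1, i.2 - θ.2) : Raiz (k * n)) else 0) :=
    fun t => diffOp_X _ _
  simp only [hrw]
  set f := Raiz.zetaR (dvd_mul_left n k) with hf
  by_cases hj : ZMod.castHom (dvd_mul_left n k) (ZMod n) i.1 = θ.1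
  · -- the unique t in the fiber matching i
    set t0 : ℕ := i.1.val with ht0
    have ht0lt : t0 < k * n := ZMod.val_lt i.1
    have ht0cast : ((t0 : ℕ) : ZMod (k * n)) = i.1 := by
      rw [ht0, ZMod.natCast_val, ZMod.cast_id]
    have ht0n : ((t0 : ℕ) : ZMod n) = θ.1 := by
      rw [ht0, ZMod.natCast_val, ← ZMod.castHom_apply (h := dvd_mul_left n k), hj]
    have ht0mem : t0 ∈ fiber n (k * n) θ.1 := by
      simp [fiber, ht0lt, ht0n]
    rw [Finset.sum_eq_single_of_mem t0 ht0mem]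
    · by_cases h2 : i.2 = θ.2
      · have h1 : i = ((t0 : ZMod (k * n)), θ.2) := by
          rw [ht0cast]; exact Prod.ext rfl h2
        have h1' : f i = θ := by
          rw [hf]; unfold Raiz.zetaR; rw [hj, h2]
        rw [if_pos h1, if_pos h1', map_one]
      · have h1 : ¬ i = ((t0 : ZMod (k * n)), θ.2) := fun h => h2 (by rw [h])
        have h1' : ¬ f i = θ := by
          intro h; exact h2 (congrArg Prod.snd h)
        rw [if_neg h1, if_neg h1']
        by_cases hlt : θ.2 < i.2
        · have c1 : (f i).1 = θ.1 ∧ θ.2 < (f i).2 := ⟨hj, hlt⟩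
          have c2 : i.1 = ((t0 : ℕ) : ZMod (k * n)) ∧ θ.2 < i.2 := ⟨ht0cast.symm, hlt⟩
          rw [if_pos c1, if_pos c2]
          rw [show (zeta (dvd_mul_left n k))
              (X ((Raiz.beg ((t0 : ZMod (k * n)), θ.2) - 1, i.2 - θ.2) : Raiz (k * n)))
              = X (Raiz.zetaR (dvd_mul_left n k)
                  ((Raiz.beg ((t0 : ZMod (k * n)), θ.2) - 1, i.2 - θ.2) : Raiz (k * n)))
            from rename_X _ _]
          congr 1
          unfold Raiz.zetaR
          refine Prod.ext ?_ rfl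
          have hc : ZMod.castHom (dvd_mul_left n k) (ZMod n)
              (Raiz.beg ((t0 : ZMod (k * n)), θ.2) - 1) = Raiz.beg θ - 1 := by
            unfold Raiz.beg
            simp only [map_add, map_sub, map_one, map_natCast, ht0cast, hj]
          exact hc.symm
        · rw [if_neg (fun h => hlt h.2), if_neg (fun h => hlt h.2), map_zero]
    · intro t ht hne
      have htlt : t < k * n := (Finset.mem_filter.mp ht).1 |> Finset.mem_range.mp
      have hneq : ¬ ((t : ℕ) : ZMod (k * n)) = i.1 := by
        intro h
        apply hne
        have := congrArg ZMod.val h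
        rwa [ZMod.val_cast_of_lt htlt] at this
      rw [if_neg (fun h => hneq (by rw [h])), if_neg (fun h => hneq h.1.symm)]
  · -- fiber contributes nothing, LHS is zero
    have h1 : ¬ f i = θ := fun h => hj (congrArg Prod.fst h)
    have h2 : ¬ ((f i).1 = θ.1 ∧ θ.2 < (f i).2) := fun h => hj h.1
    rw [if_neg h1, if_neg h2]
    rw [Finset.sum_eq_zero, map_zero]
    intro t ht
    have htn : ((t : ℕ) : ZMod n) = θ.1 := (Finset.mem_filter.mp ht).2
    have hneq : ¬ i.1 = ((t : ℕ) : ZMod (k * n)) := by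
      intro h
      apply hj
      rw [h, map_natCast, htn]
    rw [if_neg (fun h => hneq (congrArg Prod.fst h)), if_neg (fun h => hneq h.1)]

/-- For every `k ≥ 2` and every raiz `θ ∈ R⁺(n)`, the algebra homomorphism `ζ`
intertwines the operators `Ẽ`. -/
theorem zeta_intertwines_Etil (n k : ℕ) (hn : 2 ≤ n) (hk : 2 ≤ k)
    (θ : Raiz n) (P : Pol (k * n)) :
    Etil θ (zeta (dvd_mul_left n k) P)
      = zeta (dvd_mul_left n k)
          (∑ t ∈ fiber n (k * n) θ.1,
            Etil ((((t : ZMod (k * n)), θ.2) : Raiz (k * n))) P) := by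
  induction P using MvPolynomial.induction_on with
  | C a =>
    rw [show zeta (dvd_mul_left n k) (C a) = C a from rename_C _ a, Etil_C,
      Finset.sum_congr rfl (fun t _ => Etil_C _ a)]
    simp
  | add p q ihp ihq =>
    rw [map_add, Etil_add, ihp, ihq,
      Finset.sum_congr rfl (fun t _ => Etil_add _ p q),
      Finset.sum_add_distrib, map_add]
  | mul_X p i ih =>
    rw [map_mul, Etil_mul,
      Finset.sum_congr rfl (fun t _ => Etil_mul _ p (X i)),
      Finset.sum_add_distrib, map_add, ih, key hn hk θ i,
      ← map_mul, ← map_mul, ← map_add]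
    rw [show (∑ x ∈ fiber n (k * n) θ.1, Etil (((x : ZMod (k * n)), θ.2) : Raiz (k * n)) p) * X i
        + p * ∑ x ∈ fiber n (k * n) θ.1, Etil (((x : ZMod (k * n)), θ.2) : Raiz (k * n)) (X i)
      = ∑ x ∈ fiber n (k * n) θ.1, Etil (((x : ZMod (k * n)), θ.2) : Raiz (k * n)) p * X i
        + ∑ x ∈ fiber n (k * n) θ.1, p * Etil (((x : ZMod (k * n)), θ.2) : Raiz (k * n)) (X i)
      from by rw [Finset.sum_mul, Finset.mul_sum], map_add]
end
end
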